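/- arXiv:2409.06975 — 4 statements merged into one kernel-verified Lean document; each statement's English description precedes it below -/
import Mathlib

section
/- For every non-repetitive non-returning nondeterministic finite automaton with translucent letters (nr-nr-NFAwtl) A, there exists a nondeterministic finite automaton B over the same alphabet such that L(B) = L(A). Hence the language class accepted by nr-nr-NFAwtls equals the class of regular languages. -/
/-- A nondeterministic finite automaton with translucent letters (NFAwtl). -/
structure NFAwtl (Q α : Type) where
  τ : Q → Set α
  I : Set Q
  F : Set Q
  δ : Q → α → Set Q
  tr : ∀ q a, a ∈ τ q → δ q a = ∅

namespace NFAwtl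

variable {Q α : Type}

/-- One computation step of an NFAwtl: delete the leftmost non-translucent letter
and change state (the head returns to the left end). -/
def Step (A : NFAwtl Q α) : Q × List α → Q × List α → Prop := fun c c' =>
  ∃ u a v, c.2 = u ++ a :: v ∧ (∀ x ∈ u, x ∈ A.τ c.1) ∧ a ∉ A.τ c.1 ∧
    c'.1 ∈ A.δ c.1 a ∧ c'.2 = u ++ v

/-- Acceptance: from some initial state, reach a configuration whose remaining
letters are all translucent for a final state. -/
def Accepts (A : NFAwtl Q α) (w : List α) : Prop :=
  ∃ q₀ ∈ A.I, ∃ q w', Relation.ReflTransGen A.Step (q₀, w) (q, w') ∧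
    (∀ x ∈ w', x ∈ A.τ q) ∧ q ∈ A.F

def lang (A : NFAwtl Q α) : Set (List α) := { w | A.Accepts w }

/-- A DFAwtl: single initial state and at most one transition per state/letter. -/
def Deterministic (A : NFAwtl Q α) : Prop :=
  (∃ q₀, A.I = {q₀}) ∧ ∀ q a, (A.δ q a).Subsingleton

end NFAwtl

/-- A repetitive NFAwtl (RNFAwtl): on the end-of-tape marker it may accept
(states in `Facc`) or change state via `δend` and continue. -/
structure RNFAwtl (Q α : Type) where
  τ : Q → Set α
  I : Set Q
  δ : Q → α → Set Q
  δend : Q → Set Q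
  Facc : Set Q
  tr : ∀ q a, a ∈ τ q → δ q a = ∅
  accEnd : ∀ q, q ∈ Facc → δend q = ∅

namespace RNFAwtl

variable {Q α : Type}

/-- One computation step of an RNFAwtl: either delete the leftmost
non-translucent letter, or, when all remaining letters are translucent,
change state via a `◁`-transition and continue. -/
def Step (A : RNFAwtl Q α) : Q × List α → Q × List α → Prop := fun c c' =>
  (∃ u a v, c.2 = u ++ a :: v ∧ (∀ x ∈ u, x ∈ A.τ c.1) ∧ a ∉ A.τ c.1 ∧
    c'.1 ∈ A.δ c.1 a ∧ c'.2 = u ++ v)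
  ∨ ((∀ x ∈ c.2, x ∈ A.τ c.1) ∧ c'.1 ∈ A.δend c.1 ∧ c'.2 = c.2)

def Accepts (A : RNFAwtl Q α) (w : List α) : Prop :=
  ∃ q₀ ∈ A.I, ∃ q w', Relation.ReflTransGen A.Step (q₀, w) (q, w') ∧
    (∀ x ∈ w', x ∈ A.τ q) ∧ q ∈ A.Facc

def lang (A : RNFAwtl Q α) : Set (List α) := { w | A.Accepts w }

/-- An RDFAwtl: single initial state and deterministic transitions. -/
def Deterministic (A : RNFAwtl Q α) : Prop :=
  (∃ q₀, A.I = {q₀}) ∧ (∀ q a, (A.δ q a).Subsingleton) ∧ ∀ q, (A.δend q).Subsingleton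

end RNFAwtl

/-- A non-returning repetitive NFAwtl (nr-NFAwtl): the head continues from the
position of the last deleted letter; on the end-of-tape marker it may change
state and return the head to the left end. -/
structure NrNFAwtl (Q α : Type) where
  τ : Q → Set α
  I : Set Q
  δ : Q → α → Set Q
  δend : Q → Set Q
  Facc : Set Q
  tr : ∀ q a, a ∈ τ q → δ q a = ∅
  accEnd : ∀ q, q ∈ Facc → δend q = ∅

namespace NrNFAwtl

variable {Q α : Type}

/-- Configurations are `(x, q, w)`: `x` is the already-skipped prefix, the head
is on the first letter of `w`. -/
def Step (A : NrNFAwtl Q α) :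
    List α × Q × List α → List α × Q × List α → Prop := fun c c' =>
  (∃ u a v, c.2.2 = u ++ a :: v ∧ (∀ x ∈ u, x ∈ A.τ c.2.1) ∧ a ∉ A.τ c.2.1 ∧
    c'.2.1 ∈ A.δ c.2.1 a ∧ c'.1 = c.1 ++ u ∧ c'.2.2 = v)
  ∨ ((∀ x ∈ c.2.2, x ∈ A.τ c.2.1) ∧ c'.2.1 ∈ A.δend c.2.1 ∧ c'.1 = [] ∧
    c'.2.2 = c.1 ++ c.2.2)

def Accepts (A : NrNFAwtl Q α) (w : List α) : Prop :=
  ∃ q₀ ∈ A.I, ∃ x q w', Relation.ReflTransGen A.Step ([], q₀, w) (x, q, w') ∧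
    (∀ y ∈ w', y ∈ A.τ q) ∧ q ∈ A.Facc

def lang (A : NrNFAwtl Q α) : Set (List α) := { w | A.Accepts w }

def Deterministic (A : NrNFAwtl Q α) : Prop :=
  (∃ q₀, A.I = {q₀}) ∧ (∀ q a, (A.δ q a).Subsingleton) ∧ ∀ q, (A.δend q).Subsingleton

end NrNFAwtl

/-- A non-repetitive non-returning NFAwtl (nr-nr-NFAwtl): non-returning, and it
must halt as soon as all remaining letters to the right are translucent. -/
structure NrnrNFAwtl (Q α : Type) where
  τ : Q → Set α
  I : Set Q
  F : Set Q
  δ : Q → α → Set Q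
  tr : ∀ q a, a ∈ τ q → δ q a = ∅

namespace NrnrNFAwtl

variable {Q α : Type}

def Step (A : NrnrNFAwtl Q α) :
    List α × Q × List α → List α × Q × List α → Prop := fun c c' =>
  ∃ u a v, c.2.2 = u ++ a :: v ∧ (∀ x ∈ u, x ∈ A.τ c.2.1) ∧ a ∉ A.τ c.2.1 ∧
    c'.2.1 ∈ A.δ c.2.1 a ∧ c'.1 = c.1 ++ u ∧ c'.2.2 = v

def Accepts (A : NrnrNFAwtl Q α) (w : List α) : Prop :=
  ∃ q₀ ∈ A.I, ∃ x q w', Relation.ReflTransGen A.Step ([], q₀, w) (x, q, w') ∧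
    (∀ y ∈ w', y ∈ A.τ q) ∧ q ∈ A.F

def lang (A : NrnrNFAwtl Q α) : Set (List α) := { w | A.Accepts w }

def Deterministic (A : NrnrNFAwtl Q α) : Prop :=
  (∃ q₀, A.I = {q₀}) ∧ ∀ q a, (A.δ q a).Subsingleton

end NrnrNFAwtl

/-- Language classes. -/
def NFAwtlLangs (α : Type) [Fintype α] : Set (Set (List α)) :=
  { L | ∃ (Q : Type) (_ : Fintype Q) (A : NFAwtl Q α), A.lang = L }

def DFAwtlLangs (α : Type) [Fintype α] : Set (Set (List α)) :=
  { L | ∃ (Q : Type) (_ : Fintype Q) (A : NFAwtl Q α), A.Deterministic ∧ A.lang = L }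

def RNFAwtlLangs (α : Type) [Fintype α] : Set (Set (List α)) :=
  { L | ∃ (Q : Type) (_ : Fintype Q) (A : RNFAwtl Q α), A.lang = L }

def RDFAwtlLangs (α : Type) [Fintype α] : Set (Set (List α)) :=
  { L | ∃ (Q : Type) (_ : Fintype Q) (A : RNFAwtl Q α), A.Deterministic ∧ A.lang = L }

def NrNFAwtlLangs (α : Type) [Fintype α] : Set (Set (List α)) :=
  { L | ∃ (Q : Type) (_ : Fintype Q) (A : NrNFAwtl Q α), A.lang = L }

def NrDFAwtlLangs (α : Type) [Fintype α] : Set (Set (List α)) :=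
  { L | ∃ (Q : Type) (_ : Fintype Q) (A : NrNFAwtl Q α), A.Deterministic ∧ A.lang = L }

def NrnrNFAwtlLangs (α : Type) [Fintype α] : Set (Set (List α)) :=
  { L | ∃ (Q : Type) (_ : Fintype Q) (A : NrnrNFAwtl Q α), A.lang = L }

def NrnrDFAwtlLangs (α : Type) [Fintype α] : Set (Set (List α)) :=
  { L | ∃ (Q : Type) (_ : Fintype Q) (A : NrnrNFAwtl Q α), A.Deterministic ∧ A.lang = L }

/-!
An nr-nr-NFAwtl never moves its head to the left, and it halts as soon as every letter to the
right of the head is translucent. So a letter that it skips is never read later, and its whole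
computation is a single left-to-right scan: skipping a translucent letter is a self-loop, and
reading a letter is an ordinary transition. An NFA with these transitions accepts the same
language, and conversely an NFA is an nr-nr-NFAwtl without translucent letters.
-/

namespace NFA

variable {α σ : Type}

theorem mem_evalFrom_append {M : NFA α σ} {s t u : σ} {x y : List α}
    (hx : t ∈ M.evalFrom {s} x) (hy : u ∈ M.evalFrom {t} y) : u ∈ M.evalFrom {s} (x ++ y) := by
  rw [evalFrom_append, mem_evalFrom_iff_exists]
  exact ⟨t, hx, hy⟩

theorem isRegular_accepts [Finite σ] (M : NFA α σ) : M.accepts.IsRegular := by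
  classical
  have := Fintype.ofFinite σ
  exact ⟨Set σ, inferInstance, M.toDFA, M.toDFA_correct⟩

end NFA

namespace NrnrNFAwtl

variable {Q α : Type} (A : NrnrNFAwtl Q α)

def toNFA : NFA α Q where
  step q a := {q' | a ∈ A.τ q ∧ q' = q} ∪ A.δ q a
  start := A.I
  accept := A.F

variable {A}

theorem toNFA_step_of_mem {q : Q} {a : α} (ha : a ∈ A.τ q) : A.toNFA.step q a = {q} := by
  simp [toNFA, ha, A.tr q a ha]

theorem toNFA_step_of_not_mem {q : Q} {a : α} (ha : a ∉ A.τ q) :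
    A.toNFA.step q a = A.δ q a := by
  simp [toNFA, ha]

theorem self_mem_toNFA_evalFrom {q : Q} {v : List α} (hv : ∀ y ∈ v, y ∈ A.τ q) :
    q ∈ A.toNFA.evalFrom {q} v := by
  induction v with
  | nil => rfl
  | cons a v ih =>
    rw [NFA.evalFrom_cons, NFA.stepSet_singleton, toNFA_step_of_mem (hv a (.head v))]
    exact ih fun y hy => hv y (.tail a hy)

theorem exists_mem_toNFA_evalFrom_of_reflTransGen {c c' : List α × Q × List α}
    (h : Relation.ReflTransGen A.Step c c') :
    ∃ m, c.2.2 = m ++ c'.2.2 ∧ c'.2.1 ∈ A.toNFA.evalFrom {c.2.1} m := by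
  induction h with
  | refl => exact ⟨[], rfl, rfl⟩
  | tail _ hstep ih =>
    obtain ⟨m, hm, hq⟩ := ih
    obtain ⟨u, a, v, hw, hu, ha, hδ, -, hv⟩ := hstep
    refine ⟨m ++ (u ++ [a]), by simp [hm, hw, hv], NFA.mem_evalFrom_append hq ?_⟩
    refine NFA.mem_evalFrom_append (self_mem_toNFA_evalFrom hu) ?_
    rwa [NFA.evalFrom_singleton, NFA.stepSet_singleton, toNFA_step_of_not_mem ha]

theorem step_cons_of_mem {x : List α} {p : Q} {a : α} {w : List α} {c : List α × Q × List α}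
    (ha : a ∈ A.τ p) (h : A.Step (x ++ [a], p, w) c) : A.Step (x, p, a :: w) c := by
  obtain ⟨u, b, v, hw, hu, hb, hδ, hx, hv⟩ := h
  refine ⟨a :: u, b, v, congrArg (a :: ·) hw, ?_, hb, hδ, by simp [hx], hv⟩
  rintro y (_ | ⟨_, hy⟩)
  exacts [ha, hu y hy]

-- The prefix `x` is arbitrary so that a translucent letter skipped by the NFA can be moved
-- into the prefix of the run (`step_cons_of_mem`).
theorem exists_run_of_path {s t : Q} {w : List α} (path : A.toNFA.Path s t w) (x : List α) :
    ∃ x' v, Relation.ReflTransGen A.Step (x, s, w) (x', t, v) ∧ ∀ y ∈ v, y ∈ A.τ t := by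
  induction path generalizing x with
  | nil => exact ⟨x, [], .refl, by simp⟩
  | cons s' s t a w hstep _ ih =>
    by_cases ha : a ∈ A.τ s
    · rw [toNFA_step_of_mem ha, Set.mem_singleton_iff] at hstep
      subst hstep
      obtain ⟨x', v, hrun, hv⟩ := ih (x ++ [a])
      rcases hrun.cases_head with heq | ⟨c, hfirst, hrest⟩
      · cases heq
        exact ⟨x, a :: w, .refl, by simpa [ha] using hv⟩
      · exact ⟨x', v, .head (step_cons_of_mem ha hfirst) hrest, hv⟩
    · rw [toNFA_step_of_not_mem ha] at hstep
      obtain ⟨x', v, hrun, hv⟩ := ih x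
      exact ⟨x', v, .head ⟨[], a, w, rfl, by simp, ha, hstep, by simp, rfl⟩ hrun, hv⟩

theorem mem_toNFA_evalFrom_iff {p q : Q} {w : List α} :
    q ∈ A.toNFA.evalFrom {p} w ↔
      ∃ x v, Relation.ReflTransGen A.Step ([], p, w) (x, q, v) ∧ ∀ y ∈ v, y ∈ A.τ q := by
  constructor
  · rw [NFA.mem_evalFrom_iff_nonempty_path]
    exact fun ⟨path⟩ => exists_run_of_path path []
  · rintro ⟨x, v, hrun, hv⟩
    obtain ⟨m, rfl, hm⟩ := exists_mem_toNFA_evalFrom_of_reflTransGen hrun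
    exact NFA.mem_evalFrom_append hm (self_mem_toNFA_evalFrom hv)

theorem toNFA_accepts (A : NrnrNFAwtl Q α) : A.toNFA.accepts = A.lang := by
  ext w
  rw [NFA.mem_accepts]
  simp only [NFA.mem_evalFrom_iff_exists (S := A.toNFA.start), mem_toNFA_evalFrom_iff]
  constructor
  · rintro ⟨q, hq, q₀, hq₀, x, v, hrun, hv⟩
    exact ⟨q₀, hq₀, x, q, v, hrun, hv, hq⟩
  · rintro ⟨q₀, hq₀, x, q, v, hrun, hv, hq⟩
    exact ⟨q, hq, q₀, hq₀, x, v, hrun, hv⟩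

end NrnrNFAwtl

namespace NFA

variable {α σ : Type}

def toNrnrNFAwtl (M : NFA α σ) : NrnrNFAwtl σ α where
  τ _ := ∅
  I := M.start
  F := M.accept
  δ := M.step
  tr _ _ h := h.elim

theorem toNrnrNFAwtl_toNFA (M : NFA α σ) : M.toNrnrNFAwtl.toNFA = M := by
  simp [toNrnrNFAwtl, NrnrNFAwtl.toNFA]

theorem toNrnrNFAwtl_lang (M : NFA α σ) : M.toNrnrNFAwtl.lang = M.accepts := by
  rw [← NrnrNFAwtl.toNFA_accepts, toNrnrNFAwtl_toNFA]

end NFA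

/-- every nr-nr-NFAwtl is equivalent to an NFA; hence the class of
languages accepted by nr-nr-NFAwtls is exactly the class of regular languages. -/
theorem nrnrNFAwtl_equiv_NFA_and_regular (α : Type) [Fintype α] :
    (∀ (Q : Type) [Fintype Q] (A : NrnrNFAwtl Q α),
      ∃ (σ : Type) (_ : Fintype σ) (B : NFA α σ), B.accepts = A.lang) ∧
    NrnrNFAwtlLangs α = { L : Set (List α) | Language.IsRegular (L : Language α) } := by
  refine ⟨fun Q _ A => ⟨Q, inferInstance, A.toNFA, A.toNFA_accepts⟩, ?_⟩
  ext L
  constructor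
  · rintro ⟨Q, _, A, rfl⟩
    exact A.toNFA_accepts ▸ A.toNFA.isRegular_accepts
  · rintro ⟨σ, _, M, rfl⟩
    exact ⟨σ, inferInstance, M.toNFA.toNrnrNFAwtl, by rw [NFA.toNrnrNFAwtl_lang, DFA.toNFA_correct]⟩
end

section
/- The class ℒ(RDFAwtl) is closed under complementation: for every RDFAwtl A over Σ there is an RDFAwtl B with L(B) = Σ* \ L(A). -/
/-!
The complement automaton simulates `A` and moves to an accepting sink exactly when `A` gets stuck
in a non-accepting configuration. The only way a deterministic run can go on forever is a cycle of
end-of-tape moves on a fixed tape, so the simulation also records the states in which `A` made an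
end-of-tape move since its last deletion; meeting one of them again means `A` loops, and the
simulation moves to the sink as well. Conversely, if `A` accepts, determinism forces every
configuration on its run to lead to the accepting one, so none of these events can occur.
-/

open Relation

namespace List

variable {α : Type*}

theorem append_cons_inj_of_forall_mem {T : Set α} {u₁ u₂ v₁ v₂ : List α} {a₁ a₂ : α}
    (h : u₁ ++ a₁ :: v₁ = u₂ ++ a₂ :: v₂) (hu₁ : ∀ x ∈ u₁, x ∈ T) (ha₁ : a₁ ∉ T)
    (hu₂ : ∀ x ∈ u₂, x ∈ T) (ha₂ : a₂ ∉ T) : u₁ = u₂ ∧ a₁ = a₂ ∧ v₁ = v₂ := by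
  classical
  have split : ∀ {u v : List α} {a : α}, (∀ x ∈ u, x ∈ T) → a ∉ T →
      (u ++ a :: v).takeWhile (· ∈ T) = u ∧ (u ++ a :: v).dropWhile (· ∈ T) = a :: v := by
    intro u v a hu ha
    rw [takeWhile_append_of_pos (by simpa using hu), dropWhile_append_of_pos (by simpa using hu)]
    simp [ha]
  obtain ⟨ht₁, hd₁⟩ := split (v := v₁) hu₁ ha₁
  obtain ⟨ht₂, hd₂⟩ := split (v := v₂) hu₂ ha₂
  rw [h] at ht₁ hd₁
  exact ⟨ht₁.symm.trans ht₂, List.cons.inj (hd₁.symm.trans hd₂)⟩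

theorem forall_mem_or_exists_append_cons (T : Set α) (l : List α) :
    (∀ x ∈ l, x ∈ T) ∨ ∃ u a v, l = u ++ a :: v ∧ (∀ x ∈ u, x ∈ T) ∧ a ∉ T := by
  classical
  refine or_iff_not_imp_left.2 fun h => ?_
  have hne : l.dropWhile (· ∈ T) ≠ [] := by simpa [dropWhile_eq_nil_iff] using h
  refine ⟨l.takeWhile (· ∈ T), (l.dropWhile (· ∈ T)).head hne, (l.dropWhile (· ∈ T)).tail,
    ?_, fun x hx => by simpa using mem_takeWhile_imp hx, by simpa using head_dropWhile_not _ hne⟩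
  rw [cons_head_tail, takeWhile_append_dropWhile]

end List

namespace Relation

variable {γ : Type*} {r : γ → γ → Prop} {a b d : γ}

theorem ReflTransGen.of_head_of_forall_not (hr : Relator.RightUnique r) (h : ReflTransGen r a d)
    (hd : ∀ e, ¬ r d e) (hab : r a b) : ReflTransGen r b d := by
  rcases h.cases_head with rfl | ⟨c, hac, hcd⟩
  · exact absurd hab (hd b)
  · rwa [hr hab hac]

theorem ReflTransGen.not_transGen_self (hr : Relator.RightUnique r) (h : ReflTransGen r a d)
    (hd : ∀ e, ¬ r d e) : ¬ TransGen r a a := by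
  induction h using ReflTransGen.head_induction_on with
  | refl =>
    intro hcyc
    obtain ⟨e, he, -⟩ := TransGen.head'_iff.mp hcyc
    exact hd e he
  | head hab _ ih =>
    intro hcyc
    obtain ⟨e, hae, hea⟩ := TransGen.head'_iff.mp hcyc
    rw [hr hae hab] at hea
    exact ih (TransGen.tail' hea hab)

end Relation

namespace RNFAwtl

variable {Q α : Type} (A : RNFAwtl Q α)

theorem step_append_cons_iff {q : Q} {u v : List α} {a : α} {c : Q × List α}
    (hu : ∀ x ∈ u, x ∈ A.τ q) (ha : a ∉ A.τ q) :
    A.Step (q, u ++ a :: v) c ↔ c.1 ∈ A.δ q a ∧ c.2 = u ++ v := by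
  constructor
  · rintro (⟨u', a', v', e, hu', ha', hc⟩ | ⟨hall, -⟩)
    · obtain ⟨rfl, rfl, rfl⟩ := List.append_cons_inj_of_forall_mem e hu ha hu' ha'
      exact hc
    · exact absurd (hall a (by simp)) ha
  · exact fun hc => Or.inl ⟨u, a, v, rfl, hu, ha, hc⟩

theorem step_iff_of_forall_mem {q : Q} {u : List α} {c : Q × List α} (hu : ∀ x ∈ u, x ∈ A.τ q) :
    A.Step (q, u) c ↔ c.1 ∈ A.δend q ∧ c.2 = u := by
  constructor
  · rintro (⟨u', a, v, rfl, -, ha, -⟩ | ⟨-, hc⟩)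
    · exact absurd (hu a (by simp)) ha
    · exact hc
  · exact fun hc => Or.inr ⟨hu, hc⟩

theorem rightUnique_step (hA : A.Deterministic) : Relator.RightUnique A.Step := by
  rintro ⟨q, u⟩ c c' hc hc'
  rcases List.forall_mem_or_exists_append_cons (A.τ q) u with hu | ⟨u, a, v, rfl, hu, ha⟩
  · rw [A.step_iff_of_forall_mem hu] at hc hc'
    exact Prod.ext (hA.2.2 q hc.1 hc'.1) (hc.2.trans hc'.2.symm)
  · rw [A.step_append_cons_iff hu ha] at hc hc'
    exact Prod.ext (hA.2.1 q a hc.1 hc'.1) (hc.2.trans hc'.2.symm)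

theorem not_step_of_mem_Facc {q : Q} {u : List α} {c : Q × List α} (hu : ∀ x ∈ u, x ∈ A.τ q)
    (hq : q ∈ A.Facc) : ¬ A.Step (q, u) c := by
  rw [A.step_iff_of_forall_mem hu, A.accEnd q hq]
  exact fun h => h.1

def AcceptsFrom (c : Q × List α) : Prop :=
  ∃ d : Q × List α, ReflTransGen A.Step c d ∧ (∀ x ∈ d.2, x ∈ A.τ d.1) ∧ d.1 ∈ A.Facc

theorem accepts_iff_exists_acceptsFrom {w : List α} :
    A.Accepts w ↔ ∃ q₀ ∈ A.I, A.AcceptsFrom (q₀, w) := by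
  simp only [Accepts, AcceptsFrom, Prod.exists]

variable {A}

theorem acceptsFrom_iff {c : Q × List α} : A.AcceptsFrom c ↔
    ((∀ x ∈ c.2, x ∈ A.τ c.1) ∧ c.1 ∈ A.Facc) ∨ ∃ c', A.Step c c' ∧ A.AcceptsFrom c' := by
  constructor
  · rintro ⟨d, hcd, hd⟩
    rcases hcd.cases_head with rfl | ⟨c', hcc', hc'd⟩
    · exact Or.inl hd
    · exact Or.inr ⟨c', hcc', d, hc'd, hd⟩
  · rintro (hc | ⟨c', hcc', d, hc'd, hd⟩)
    · exact ⟨c, .refl, hc⟩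
    · exact ⟨d, .head hcc' hc'd, hd⟩

theorem AcceptsFrom.of_step (hA : A.Deterministic) {c c' : Q × List α} (h : A.AcceptsFrom c)
    (hc : A.Step c c') : A.AcceptsFrom c' :=
  let ⟨d, hcd, hd⟩ := h
  ⟨d, hcd.of_head_of_forall_not (A.rightUnique_step hA)
    (fun _ => A.not_step_of_mem_Facc hd.1 hd.2) hc, hd⟩

theorem AcceptsFrom.not_transGen_self (hA : A.Deterministic) {c : Q × List α}
    (h : A.AcceptsFrom c) : ¬ TransGen A.Step c c :=
  let ⟨_, hcd, hd⟩ := h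
  hcd.not_transGen_self (A.rightUnique_step hA) fun _ => A.not_step_of_mem_Facc hd.1 hd.2

variable (A) [DecidableEq Q]

/-- In state `some (q, S)` the automaton simulates `A` in state `q`, where `S` holds the states in
which `A` has made an end-of-tape move since its last deletion; `none` is an accepting sink. -/
def complement : RNFAwtl (Option (Q × Finset Q)) α where
  τ s := s.elim Set.univ fun p => A.τ p.1
  I := (fun q => some (q, ∅)) '' A.I
  δ
    | none, _ => ∅
    | some (q, _), a => {s | a ∉ A.τ q ∧ s.elim (A.δ q a = ∅) fun p => p.1 ∈ A.δ q a ∧ p.2 = ∅}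
  δend
    | none => ∅
    | some (q, S) => {s | q ∉ A.Facc ∧
        s.elim (q ∈ S ∨ A.δend q = ∅) fun p => q ∉ S ∧ p.1 ∈ A.δend q ∧ p.2 = insert q S}
  Facc := {none}
  tr := by
    rintro (_ | ⟨q, S⟩) a ha
    · rfl
    · exact Set.eq_empty_of_forall_notMem fun _ hs => hs.1 ha
  accEnd := by
    rintro _ rfl
    rfl

variable {A}

theorem complement_deterministic (hA : A.Deterministic) : A.complement.Deterministic := by
  obtain ⟨⟨q₀, hI⟩, hδ, hδend⟩ := hA
  refine ⟨⟨some (q₀, ∅), by simp [complement, hI]⟩, ?_, ?_⟩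
  · rintro (_ | ⟨q, S⟩) a
    · exact Set.subsingleton_empty
    rintro (_ | ⟨q₁, S₁⟩) ⟨-, h₁⟩ (_ | ⟨q₂, S₂⟩) ⟨-, h₂⟩
    · rfl
    · exact absurd (h₁ ▸ h₂.1) (Set.notMem_empty q₂)
    · exact absurd (h₂ ▸ h₁.1) (Set.notMem_empty q₁)
    · obtain ⟨hq₁, rfl⟩ := h₁
      obtain ⟨hq₂, rfl⟩ := h₂
      rw [show q₁ = q₂ from hδ q a hq₁ hq₂]
  · rintro (_ | ⟨q, S⟩)
    · exact Set.subsingleton_empty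
    rintro (_ | ⟨q₁, S₁⟩) ⟨-, h₁⟩ (_ | ⟨q₂, S₂⟩) ⟨-, h₂⟩
    · rfl
    · exact absurd (h₁.resolve_left h₂.1 ▸ h₂.2.1) (Set.notMem_empty q₂)
    · exact absurd (h₂.resolve_left h₁.1 ▸ h₁.2.1) (Set.notMem_empty q₁)
    · obtain ⟨-, hq₁, rfl⟩ := h₁
      obtain ⟨-, hq₂, rfl⟩ := h₂
      rw [show q₁ = q₂ from hδend q hq₁ hq₂]

theorem complement_accepts_iff {w : List α} : A.complement.Accepts w ↔
    ∃ q₀ ∈ A.I, ∃ v, ReflTransGen A.complement.Step (some (q₀, ∅), w) (none, v) := by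
  constructor
  · rintro ⟨-, ⟨q₀, hq₀, rfl⟩, -, v, h, -, rfl⟩
    exact ⟨q₀, hq₀, v, h⟩
  · rintro ⟨q₀, hq₀, v, h⟩
    exact ⟨_, ⟨q₀, hq₀, rfl⟩, none, v, h, fun _ _ => trivial, rfl⟩

theorem complement_reaches_none_of_not_acceptsFrom [Fintype Q] {q : Q} {S : Finset Q}
    {u : List α} (h : ¬ A.AcceptsFrom (q, u)) :
    ∃ v, ReflTransGen A.complement.Step (some (q, S), u) (none, v) := by
  rw [acceptsFrom_iff] at h
  simp only [not_or, not_exists, not_and] at h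
  obtain ⟨hacc, hstep⟩ := h
  rcases List.forall_mem_or_exists_append_cons (A.τ q) u with hu | ⟨u₁, a, v, rfl, hu, ha⟩
  · have hF : q ∉ A.Facc := fun hF => hacc hu hF
    by_cases hstop : q ∈ S ∨ A.δend q = ∅
    · exact ⟨u, .single (Or.inr ⟨hu, ⟨hF, hstop⟩, rfl⟩)⟩
    obtain ⟨hS, hne⟩ := not_or.1 hstop
    obtain ⟨q', hq'⟩ := Set.nonempty_iff_ne_empty.2 hne
    obtain ⟨w, hw⟩ := complement_reaches_none_of_not_acceptsFrom (S := insert q S)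
      (hstep (q', u) ((A.step_iff_of_forall_mem hu).2 ⟨hq', rfl⟩))
    exact ⟨w, .head (b := (some (q', insert q S), u))
      (Or.inr ⟨hu, ⟨hF, hS, hq', rfl⟩, rfl⟩) hw⟩
  · by_cases hstop : A.δ q a = ∅
    · exact ⟨u₁ ++ v, .single (Or.inl ⟨u₁, a, v, rfl, hu, ha, ⟨ha, hstop⟩, rfl⟩)⟩
    obtain ⟨q', hq'⟩ := Set.nonempty_iff_ne_empty.2 hstop
    obtain ⟨w, hw⟩ := complement_reaches_none_of_not_acceptsFrom (S := ∅)
      (hstep (q', u₁ ++ v) ((A.step_append_cons_iff hu ha).2 ⟨hq', rfl⟩))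
    exact ⟨w, .head (b := (some (q', ∅), u₁ ++ v))
      (Or.inl ⟨u₁, a, v, rfl, hu, ha, ⟨ha, hq', rfl⟩, rfl⟩) hw⟩
termination_by (u.length, Fintype.card Q - S.card)
decreasing_by
  · exact Prod.Lex.right _ (Nat.sub_lt_sub_left (Finset.card_lt_univ_of_notMem hS)
      (Finset.card_lt_card (Finset.ssubset_insert hS)))
  · exact Prod.Lex.left _ _ (by subst_vars; simp)

theorem not_acceptsFrom_of_complement_step_none (hA : A.Deterministic) {q : Q} {S : Finset Q}
    {u u' : List α} (hS : ∀ p ∈ S, TransGen A.Step (p, u) (q, u))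
    (h : A.complement.Step (some (q, S), u) (none, u')) : ¬ A.AcceptsFrom (q, u) := by
  intro hacc
  rcases List.forall_mem_or_exists_append_cons (A.τ q) u with hu | ⟨u₁, a, w, rfl, hu, ha⟩
  · obtain ⟨⟨hF, hq | hend⟩, -⟩ :=
      (A.complement.step_iff_of_forall_mem (q := some (q, S)) hu).1 h
    · exact hacc.not_transGen_self hA (hS q hq)
    rcases acceptsFrom_iff.1 hacc with ⟨-, hq⟩ | ⟨c', hc', -⟩
    · exact hF hq
    · exact Set.notMem_empty _ (hend ▸ ((A.step_iff_of_forall_mem hu).1 hc').1)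
  · obtain ⟨⟨-, hδ⟩, -⟩ := (A.complement.step_append_cons_iff (q := some (q, S)) hu ha).1 h
    rcases acceptsFrom_iff.1 hacc with ⟨hall, -⟩ | ⟨c', hc', -⟩
    · exact ha (hall a (by simp))
    · exact Set.notMem_empty _ (hδ ▸ ((A.step_append_cons_iff hu ha).1 hc').1)

theorem step_of_complement_step_some {q q' : Q} {S S' : Finset Q} {u u' : List α}
    (hS : ∀ p ∈ S, TransGen A.Step (p, u) (q, u))
    (h : A.complement.Step (some (q, S), u) (some (q', S'), u')) :
    A.Step (q, u) (q', u') ∧ ∀ p ∈ S', TransGen A.Step (p, u') (q', u') := by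
  rcases List.forall_mem_or_exists_append_cons (A.τ q) u with hu | ⟨u₁, a, w, rfl, hu, ha⟩
  · obtain ⟨⟨-, -, hq', rfl⟩, rfl⟩ :=
      (A.complement.step_iff_of_forall_mem (q := some (q, S)) hu).1 h
    have hstep : A.Step (q, u') (q', u') := (A.step_iff_of_forall_mem hu).2 ⟨hq', rfl⟩
    refine ⟨hstep, fun p hp => ?_⟩
    rcases Finset.mem_insert.1 hp with rfl | hp
    · exact .single hstep
    · exact (hS p hp).tail hstep
  · obtain ⟨⟨-, hq', rfl⟩, rfl⟩ :=
      (A.complement.step_append_cons_iff (q := some (q, S)) hu ha).1 h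
    exact ⟨(A.step_append_cons_iff hu ha).2 ⟨hq', rfl⟩, by simp⟩

theorem not_acceptsFrom_of_complement_reaches_none (hA : A.Deterministic)
    {c : Option (Q × Finset Q) × List α} {v : List α}
    (h : ReflTransGen A.complement.Step c (none, v)) {q : Q} {S : Finset Q}
    (hc : c.1 = some (q, S)) (hS : ∀ p ∈ S, TransGen A.Step (p, c.2) (q, c.2)) :
    ¬ A.AcceptsFrom (q, c.2) := by
  induction h using ReflTransGen.head_induction_on generalizing q S with
  | refl => cases hc
  | @head c c' hstep _ ih =>
    obtain ⟨s, u⟩ := c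
    obtain rfl : s = some (q, S) := hc
    obtain ⟨_ | ⟨q', S'⟩, u'⟩ := c'
    · exact not_acceptsFrom_of_complement_step_none hA hS hstep
    · obtain ⟨hstepA, hS'⟩ := step_of_complement_step_some hS hstep
      exact fun hacc => ih rfl hS' (hacc.of_step hA hstepA)

theorem complement_reaches_none_iff [Fintype Q] (hA : A.Deterministic) {q : Q} {u : List α} :
    (∃ v, ReflTransGen A.complement.Step (some (q, ∅), u) (none, v)) ↔ ¬ A.AcceptsFrom (q, u) :=
  ⟨fun ⟨_, h⟩ => not_acceptsFrom_of_complement_reaches_none hA h rfl (by simp),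
    complement_reaches_none_of_not_acceptsFrom⟩

end RNFAwtl

theorem RDFAwtl_closed_complement_general (α : Type) (Q : Type) [Fintype Q]
    (A : RNFAwtl Q α) (hA : A.Deterministic) :
    ∃ (Q' : Type) (_ : Fintype Q') (B : RNFAwtl Q' α),
      B.Deterministic ∧ B.lang = A.langᶜ := by
  classical
  refine ⟨_, inferInstance, A.complement, RNFAwtl.complement_deterministic hA, Set.ext fun w => ?_⟩
  obtain ⟨q₀, hI⟩ := hA.1
  change A.complement.Accepts w ↔ ¬ A.Accepts w
  rw [RNFAwtl.complement_accepts_iff, RNFAwtl.accepts_iff_exists_acceptsFrom, hI]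
  simp only [Set.mem_singleton_iff, exists_eq_left, RNFAwtl.complement_reaches_none_iff hA]

/-- ℒ(RDFAwtl) is closed under complementation. -/
theorem RDFAwtl_closed_complement (α : Type) [Fintype α] (Q : Type) [Fintype Q]
    (A : RNFAwtl Q α) (hA : A.Deterministic) :
    ∃ (Q' : Type) (_ : Fintype Q') (B : RNFAwtl Q' α),
      B.Deterministic ∧ B.lang = A.langᶜ :=
  RDFAwtl_closed_complement_general α Q A hA
end

section
/- The class ℒ(RDFAwtl) is closed under left quotient with respect to a single word: if L ⊆ Σ* is accepted by an RDFAwtl, then for every w ∈ Σ* the language w ⟍ L = { z ∈ Σ* : wz ∈ L } is accepted by an RDFAwtl. -/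
/-!
Run an RDFAwtl `A` on `w ++ z`. As long as some letter of the part `v` of `w` still on the tape
is not translucent for the current state, the next step deletes a letter of `v`; by determinism
this deletion phase has at most one end, a configuration in which all of `v` is translucent.
From there `A` acts on `z` as it would on `z` alone, and after each such step the deletion
phase inside `v` resumes. So an automaton for `w⁻¹L` can keep the end of the current deletion
phase, a state of `A` together with a subsequence of `w`, in its finite control.
-/

theorem List.leftmost_split_unique {α : Type*} {p : α → Prop} {u u' v v' : List α} {a a' : α}
    (h : u ++ a :: v = u' ++ a' :: v') (hu : ∀ x ∈ u, p x) (ha : ¬ p a)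
    (hu' : ∀ x ∈ u', p x) (ha' : ¬ p a') : u = u' ∧ a = a' ∧ v = v' := by
  induction u generalizing u' with
  | nil =>
    cases u' with
    | nil => simpa using h
    | cons b u' => exact absurd (List.cons.inj h).1 fun hab => ha (hab ▸ hu' b (by simp))
  | cons b u ih =>
    cases u' with
    | nil => exact absurd (List.cons.inj h).1 fun hba => ha' (hba ▸ hu b (by simp))
    | cons b' u' =>
      simp only [List.cons_append, List.cons.injEq] at h
      obtain ⟨rfl, rfl, rfl⟩ :=
        ih h.2 (fun x hx => hu x (.tail _ hx)) fun x hx => hu' x (.tail _ hx)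
      exact ⟨by rw [h.1], rfl, rfl⟩

instance List.finite_subtype_sublist {α : Type*} (w : List α) :
    Finite {v : List α // v.Sublist w} :=
  ((List.finite_toSet w.sublists).subset fun _ hv => List.mem_sublists.2 hv).to_subtype

open Relation

namespace RNFAwtl

variable {Q α : Type} (A : RNFAwtl Q α)

def SeesEnd (c : Q × List α) : Prop := ∀ x ∈ c.2, x ∈ A.τ c.1

def DelStep : Q × List α → Q × List α → Prop := fun c c' =>
  ∃ u a v, c.2 = u ++ a :: v ∧ (∀ x ∈ u, x ∈ A.τ c.1) ∧ a ∉ A.τ c.1 ∧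
    c'.1 ∈ A.δ c.1 a ∧ c'.2 = u ++ v

def AccFrom (c : Q × List α) : Prop :=
  ∃ c', ReflTransGen A.Step c c' ∧ A.SeesEnd c' ∧ c'.1 ∈ A.Facc

def normalForms (c : Q × List α) : Set (Q × List α) :=
  {c' | ReflTransGen A.DelStep c c' ∧ A.SeesEnd c'}

variable {A}

theorem accepts_iff {w : List α} : A.Accepts w ↔ ∃ q ∈ A.I, A.AccFrom (q, w) := by
  simp only [Accepts, AccFrom, SeesEnd, Prod.exists]

theorem AccFrom.head {c c' : Q × List α} (h : ReflTransGen A.Step c c') (hc' : A.AccFrom c') :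
    A.AccFrom c :=
  let ⟨c'', hrun, hacc⟩ := hc'
  ⟨c'', h.trans hrun, hacc⟩

@[elab_as_elim]
theorem AccFrom.induction {P : Q × List α → Prop}
    (accept : ∀ c, A.SeesEnd c → c.1 ∈ A.Facc → P c)
    (step : ∀ c c', A.Step c c' → P c' → P c) {c : Q × List α} (h : A.AccFrom c) : P c := by
  obtain ⟨c', hrun, hend, hfin⟩ := h
  induction hrun using ReflTransGen.head_induction_on with
  | refl => exact accept _ hend hfin
  | head hstep _ ih => exact step _ _ hstep ih

theorem DelStep.append_right {c c' : Q × List α} (h : A.DelStep c c') (y : List α) :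
    A.DelStep (c.1, c.2 ++ y) (c'.1, c'.2 ++ y) := by
  obtain ⟨u, a, v, hc, hu, ha, hq, hc'⟩ := h
  exact ⟨u, a, v ++ y, by simp [hc], hu, ha, hq, by simp [hc']⟩

theorem SeesEnd.not_delStep {c c' : Q × List α} (h : A.SeesEnd c) : ¬ A.DelStep c c' := by
  rintro ⟨u, a, v, hc, -, ha, -, -⟩
  exact ha (h a (by simp [hc]))

theorem DelStep.sublist {c c' : Q × List α} (h : A.DelStep c c') : c'.2.Sublist c.2 := by
  obtain ⟨u, a, v, hc, -, -, -, hc'⟩ := h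
  rw [hc, hc']
  exact (List.sublist_cons_self a v).append_left u

theorem sublist_of_mem_normalForms {c p : Q × List α} (hp : p ∈ A.normalForms c) :
    p.2.Sublist c.2 := by
  obtain ⟨hrun, -⟩ := hp
  induction hrun with
  | refl => exact List.Sublist.refl _
  | tail _ hstep ih => exact hstep.sublist.trans ih

theorem accFrom_of_mem_normalForms {c p : Q × List α} (hp : p ∈ A.normalForms c) {y : List α}
    (h : A.AccFrom (p.1, p.2 ++ y)) : A.AccFrom (c.1, c.2 ++ y) :=
  AccFrom.head (hp.1.lift (fun c => (c.1, c.2 ++ y)) fun _ _ hs => Or.inl (hs.append_right y))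
    h

theorem mem_normalForms_self {c : Q × List α} (h : A.SeesEnd c) : c ∈ A.normalForms c :=
  ⟨ReflTransGen.refl, h⟩

theorem DelStep.unique (hδ : ∀ q a, (A.δ q a).Subsingleton) {c c₁ c₂ : Q × List α}
    (h₁ : A.DelStep c c₁) (h₂ : A.DelStep c c₂) : c₁ = c₂ := by
  obtain ⟨u, a, v, hc, hu, ha, hq, hc₁⟩ := h₁
  obtain ⟨u', a', v', hc', hu', ha', hq', hc₂⟩ := h₂
  obtain ⟨rfl, rfl, rfl⟩ := List.leftmost_split_unique (hc.symm.trans hc') hu ha hu' ha'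
  exact Prod.ext (hδ c.1 a hq hq') (hc₁.trans hc₂.symm)

theorem normalForms_subsingleton (hδ : ∀ q a, (A.δ q a).Subsingleton) (c : Q × List α) :
    (A.normalForms c).Subsingleton := by
  rintro p ⟨hp, hpend⟩ p' ⟨hp', hp'end⟩
  induction hp using ReflTransGen.head_induction_on with
  | refl =>
    rcases hp'.cases_head with rfl | ⟨_, hstep, _⟩
    · rfl
    · exact absurd hstep hpend.not_delStep
  | head hstep _ ih =>
    rcases hp'.cases_head with rfl | ⟨_, hstep', hrest⟩
    · exact absurd hstep hp'end.not_delStep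
    · exact ih ((hstep.unique hδ hstep') ▸ hrest)

theorem normalForms_eq_of_delStep (hδ : ∀ q a, (A.δ q a).Subsingleton) {c c' : Q × List α}
    (h : A.DelStep c c') : A.normalForms c = A.normalForms c' := by
  ext p
  refine ⟨fun ⟨hp, hpend⟩ => ?_, fun ⟨hp, hpend⟩ => ⟨ReflTransGen.head h hp, hpend⟩⟩
  rcases hp.cases_head with rfl | ⟨_, hstep, hrest⟩
  · exact absurd h hpend.not_delStep
  · exact ⟨h.unique hδ hstep ▸ hrest, hpend⟩

theorem Step.append_left {q : Q} {v y : List α} (hv : A.SeesEnd (q, v)) {c' : Q × List α}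
    (h : A.Step (q, y) c') : A.Step (q, v ++ y) (c'.1, v ++ c'.2) := by
  rcases h with ⟨u, a, t, hy, hu, ha, hq, hc'⟩ | ⟨hy, hq, hc'⟩
  · exact Or.inl ⟨v ++ u, a, t, by simpa using congrArg (v ++ ·) hy,
      List.forall_mem_append.2 ⟨hv, hu⟩, ha, hq, by simp [hc']⟩
  · exact Or.inr ⟨List.forall_mem_append.2 ⟨hv, hy⟩, hq, by simp [hc']⟩

theorem Step.of_append_left {q : Q} {v y : List α} (hv : A.SeesEnd (q, v)) {c' : Q × List α}
    (h : A.Step (q, v ++ y) c') : ∃ y', A.Step (q, y) (c'.1, y') ∧ c'.2 = v ++ y' := by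
  rcases h with ⟨u, a, t, hc, hu, ha, hq, hc'⟩ | ⟨hend, hq, hc'⟩
  · rcases List.append_eq_append_iff.1 hc with ⟨k, rfl, hy⟩ | ⟨k, hv', hk⟩
    · exact ⟨k ++ t, Or.inl ⟨k, a, t, hy, fun x hx => hu x (by simp [hx]), ha, hq, rfl⟩,
        by simp [hc']⟩
    · rcases k with _ | ⟨b, k⟩
      · simp only [List.append_nil, List.nil_append] at hv' hk
        exact ⟨t, Or.inl ⟨[], a, t, hk.symm, by simp, ha, hq, rfl⟩, by simp [hc', hv']⟩
      · obtain ⟨rfl, -⟩ := List.cons.inj hk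
        exact absurd (hv a (by simp [hv'])) ha
  · exact ⟨y, Or.inr ⟨fun x hx => hend x (by simp [hx]), hq, rfl⟩, hc'⟩

theorem DelStep.of_step_append {q : Q} {v y : List α} (hv : ¬ A.SeesEnd (q, v))
    {c' : Q × List α} (h : A.Step (q, v ++ y) c') :
    ∃ v', A.DelStep (q, v) (c'.1, v') ∧ c'.2 = v' ++ y := by
  rcases h with ⟨u, a, t, hc, hu, ha, hq, hc'⟩ | ⟨hend, -, -⟩
  · rcases List.append_eq_append_iff.1 hc with ⟨k, rfl, -⟩ | ⟨k, rfl, hk⟩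
    · exact absurd (fun x hx => hu x (by simp [hx])) hv
    · rcases k with _ | ⟨b, k⟩
      · exact (hv (by simpa [SeesEnd] using hu)).elim
      · obtain ⟨rfl, rfl⟩ := List.cons.inj hk
        exact ⟨u ++ k, ⟨u, a, k, rfl, hu, ha, hq, rfl⟩, by simp [hc']⟩
  · exact absurd (fun x hx => hend x (by simp [hx])) hv

variable (A) in
open Classical in
/-- `none` is a dead state, the value when the deletion phase from `c` gets stuck. -/
noncomputable def quotState (w : List α) (c : Q × List α) (hc : c.2.Sublist w) :
    Option (Q × {v : List α // v.Sublist w}) :=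
  if h : (A.normalForms c).Nonempty then
    some (h.choose.1, ⟨h.choose.2, (sublist_of_mem_normalForms h.choose_spec).trans hc⟩)
  else none

theorem mem_normalForms_of_quotState_eq_some {w : List α} {c : Q × List α} {hc : c.2.Sublist w}
    {q : Q} {v : {v : List α // v.Sublist w}} (h : A.quotState w c hc = some (q, v)) :
    (q, v.1) ∈ A.normalForms c := by
  unfold quotState at h
  split_ifs at h with hne
  obtain ⟨rfl, rfl⟩ := Prod.mk.inj (Option.some.inj h)
  exact hne.choose_spec

theorem quotState_eq_of_mem_normalForms (hδ : ∀ q a, (A.δ q a).Subsingleton) {w : List α}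
    {c p : Q × List α} (hc : c.2.Sublist w) (hp : p ∈ A.normalForms c) :
    A.quotState w c hc = some (p.1, ⟨p.2, (sublist_of_mem_normalForms hp).trans hc⟩) := by
  have hne : (A.normalForms c).Nonempty := ⟨p, hp⟩
  rw [quotState, dif_pos hne]
  obtain rfl := normalForms_subsingleton hδ c hne.choose_spec hp
  rfl

theorem quotState_eq_of_delStep (hδ : ∀ q a, (A.δ q a).Subsingleton) {w : List α}
    {c c' : Q × List α} (h : A.DelStep c c') (hc : c.2.Sublist w) (hc' : c'.2.Sublist w) :
    A.quotState w c hc = A.quotState w c' hc' := by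
  have heq := normalForms_eq_of_delStep hδ h
  by_cases hne : (A.normalForms c').Nonempty
  · obtain ⟨p, hp⟩ := hne
    rw [quotState_eq_of_mem_normalForms hδ hc (heq ▸ hp),
      quotState_eq_of_mem_normalForms hδ hc' hp]
  · rw [quotState, quotState, dif_neg hne, dif_neg (heq ▸ hne)]

variable (A) in
noncomputable def leftQuot (q₀ : Q) (w : List α) :
    RNFAwtl (Option (Q × {v : List α // v.Sublist w})) α where
  τ
    | none => ∅
    | some (q, _) => A.τ q
  I := {A.quotState w (q₀, w) (List.Sublist.refl w)}
  δ
    | none, _ => ∅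
    | some (q, v), a => (fun q₁ => A.quotState w (q₁, v.1) v.2) '' A.δ q a
  δend
    | none => ∅
    | some (q, v) => (fun q₁ => A.quotState w (q₁, v.1) v.2) '' A.δend q
  Facc := some '' (Prod.fst ⁻¹' A.Facc)
  tr := by
    rintro (_ | ⟨q, v⟩) a ha
    · rfl
    · exact (congrArg _ (A.tr q a ha)).trans (Set.image_empty _)
  accEnd := by
    rintro _ ⟨⟨q, v⟩, hq, rfl⟩
    exact (congrArg _ (A.accEnd q hq)).trans (Set.image_empty _)

variable {q₀ : Q} {w : List α}

theorem leftQuot_step_iff {c c' : Option (Q × {v : List α // v.Sublist w}) × List α} :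
    (A.leftQuot q₀ w).Step c c' ↔ ∃ q v q₁, c.1 = some (q, v) ∧ A.Step (q, c.2) (q₁, c'.2) ∧
      c'.1 = A.quotState w (q₁, v.1) v.2 := by
  obtain ⟨_ | ⟨q, v⟩, y⟩ := c
  · simp [Step, leftQuot]
  constructor
  · rintro (⟨u, a, t, hy, hu, ha, ⟨q₁, hq₁, hs⟩, hy'⟩ | ⟨hy, ⟨q₁, hq₁, hs⟩, hy'⟩)
    · exact ⟨q, v, q₁, rfl, Or.inl ⟨u, a, t, hy, hu, ha, hq₁, hy'⟩, hs.symm⟩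
    · exact ⟨q, v, q₁, rfl, Or.inr ⟨hy, hq₁, hy'⟩, hs.symm⟩
  · rintro ⟨q, v, q₁, ⟨⟩, (⟨u, a, t, hy, hu, ha, hq₁, hy'⟩ | ⟨hy, hq₁, hy'⟩), hs⟩
    · exact Or.inl ⟨u, a, t, hy, hu, ha, ⟨q₁, hq₁, hs.symm⟩, hy'⟩
    · exact Or.inr ⟨hy, ⟨q₁, hq₁, hs.symm⟩, hy'⟩

theorem leftQuot_accFrom_of_accFrom (hδ : ∀ q a, (A.δ q a).Subsingleton) {q : Q}
    {v y : List α} (hv : v.Sublist w) (h : A.AccFrom (q, v ++ y)) :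
    (A.leftQuot q₀ w).AccFrom (A.quotState w (q, v) hv, y) := by
  suffices key : ∀ c, A.AccFrom c → ∀ v y (hv : v.Sublist w), c.2 = v ++ y →
      (A.leftQuot q₀ w).AccFrom (A.quotState w (c.1, v) hv, y) from key _ h v y hv rfl
  refine fun c hc => hc.induction ?_ ?_
  · rintro ⟨q, _⟩ hend hfin v y hv rfl
    obtain ⟨hvend, hyend⟩ := List.forall_mem_append.1 hend
    rw [quotState_eq_of_mem_normalForms hδ hv (c := (q, v)) (mem_normalForms_self hvend)]
    exact ⟨_, .refl, hyend, ⟨(q, ⟨v, hv⟩), hfin, rfl⟩⟩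
  · rintro ⟨q, _⟩ c' hstep ih v y hv rfl
    by_cases hse : A.SeesEnd (q, v)
    · obtain ⟨y', hy', hc'⟩ := Step.of_append_left hse hstep
      rw [quotState_eq_of_mem_normalForms hδ hv (mem_normalForms_self hse)]
      exact AccFrom.head (.single (leftQuot_step_iff.2 ⟨q, ⟨v, hv⟩, c'.1, rfl, hy', rfl⟩))
        (ih v y' hv hc')
    · obtain ⟨v', hdel, hc'⟩ := DelStep.of_step_append hse hstep
      rw [quotState_eq_of_delStep hδ hdel hv (hdel.sublist.trans hv)]
      exact ih v' y _ hc'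

theorem accFrom_of_leftQuot_accFrom {q : Q} {v y : List α} (hv : v.Sublist w)
    (h : (A.leftQuot q₀ w).AccFrom (A.quotState w (q, v) hv, y)) : A.AccFrom (q, v ++ y) := by
  suffices key : ∀ c, (A.leftQuot q₀ w).AccFrom c → ∀ q v (hv : v.Sublist w),
      c.1 = A.quotState w (q, v) hv → A.AccFrom (q, v ++ c.2) from key _ h q v hv rfl
  refine fun c hc => hc.induction ?_ ?_
  · rintro ⟨_, y⟩ hend ⟨⟨q', v'⟩, hq', rfl⟩ q v hv hs
    have hp := mem_normalForms_of_quotState_eq_some hs.symm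
    exact accFrom_of_mem_normalForms hp ⟨_, .refl, List.forall_mem_append.2 ⟨hp.2, hend⟩, hq'⟩
  · rintro c c' hstep ih q v hv hs
    obtain ⟨q', v', q₁, hs', hstep', hc'⟩ := leftQuot_step_iff.1 hstep
    have hp := mem_normalForms_of_quotState_eq_some (hs.symm.trans hs')
    exact accFrom_of_mem_normalForms hp
      (AccFrom.head (.single (Step.append_left hp.2 hstep')) (ih q₁ v' v'.2 hc'))

theorem leftQuot_deterministic (hδ : ∀ q a, (A.δ q a).Subsingleton)
    (hδend : ∀ q, (A.δend q).Subsingleton) : (A.leftQuot q₀ w).Deterministic :=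
  ⟨⟨_, rfl⟩, fun
    | none, _ => Set.subsingleton_empty
    | some (q, _), a => (hδ q a).image _, fun
    | none => Set.subsingleton_empty
    | some (q, _) => (hδend q).image _⟩

theorem leftQuot_lang (hδ : ∀ q a, (A.δ q a).Subsingleton) (hI : A.I = {q₀}) :
    (A.leftQuot q₀ w).lang = {z | w ++ z ∈ A.lang} := by
  ext z
  change (A.leftQuot q₀ w).Accepts z ↔ A.Accepts (w ++ z)
  rw [accepts_iff, accepts_iff, hI]
  simp only [leftQuot, Set.mem_singleton_iff, exists_eq_left]
  exact ⟨accFrom_of_leftQuot_accFrom _, leftQuot_accFrom_of_accFrom hδ _⟩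

end RNFAwtl

/-- ℒ(RDFAwtl) is closed under left quotient by a single word. -/
theorem RDFAwtl_closed_leftQuotient (α : Type) [Fintype α]
    (L : Set (List α)) (hL : L ∈ RDFAwtlLangs α) (w : List α) :
    { z : List α | w ++ z ∈ L } ∈ RDFAwtlLangs α := by
  obtain ⟨Q, _, A, ⟨⟨q₀, hI⟩, hδ, hδend⟩, rfl⟩ := hL
  exact ⟨_, Fintype.ofFinite _, A.leftQuot q₀ w, A.leftQuot_deterministic hδ hδend,
    A.leftQuot_lang hδ hI⟩
end

section
/- The class ℒ(RDFAwtl) is closed under disjoint shuffle: if Σ_A and Σ_B are disjoint alphabets and L_A ⊆ Σ_A*, L_B ⊆ Σ_B* are accepted by RDFAwtls, then the shuffle L_A ⧢ L_B ⊆ (Σ_A ∪ Σ_B)* is accepted by an RDFAwtl. -/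
/-- `Shuffles u v w` holds iff `w` is an interleaving (shuffle) of `u` and `v`. -/
inductive Shuffles {α : Type} : List α → List α → List α → Prop
  | nil : Shuffles [] [] []
  | left {x : α} {u v w : List α} : Shuffles u v w → Shuffles (x :: u) v (x :: w)
  | right {x : α} {u v w : List α} : Shuffles u v w → Shuffles u (x :: v) (x :: w)

/-- The shuffle of two languages. -/
def shuffleLang {α : Type} (L₁ L₂ : Set (List α)) : Set (List α) :=
  { w | ∃ u ∈ L₁, ∃ v ∈ L₂, Shuffles u v w }

/-! The automaton first runs `A` with all letters of `SB` translucent, so that, `SA` and `SB` being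
disjoint, it sees exactly the projection of the input to `SA`. When `A` accepts, it switches to
the initial state of `B`, which then runs on the projection to `SB`, deleting the letters left
over from `A` on its way. A word over `SA ∪ SB` is a shuffle of its two projections, and conversely a
shuffle of `u ∈ SA*` and `v ∈ SB*` projects back to `u` and `v`. -/

theorem Relation.ReflTransGen.exists_step_of_not {γ : Type*} {r : γ → γ → Prop}
    {P : γ → Prop} {a c : γ} (h : Relation.ReflTransGen r a c) (ha : P a) (hc : ¬P c) :
    ∃ b b', Relation.ReflTransGen r a b ∧ P b ∧ r b b' ∧ ¬P b' ∧
      Relation.ReflTransGen r b' c := by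
  induction h with
  | refl => exact absurd ha hc
  | @tail b c hab hbc ih =>
    by_cases hb : P b
    · exact ⟨b, c, hab, hb, hbc, hc, .refl⟩
    · obtain ⟨d, d', had, hd, hdd', hd', hd'b⟩ := ih hb
      exact ⟨d, d', had, hd, hdd', hd', hd'b.tail hbc⟩

theorem List.exists_eq_append_cons_of_filter_eq {α : Type*} {p : α → Bool} {w s t : List α}
    {a : α} (h : w.filter p = s ++ a :: t) :
    ∃ x y, w = x ++ a :: y ∧ x.filter p = s ∧ y.filter p = t ∧ p a := by
  obtain ⟨l₁, l₂, rfl, hl₁, hl₂⟩ := List.filter_eq_append_iff.1 h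
  obtain ⟨m₁, m₂, rfl, hm₁, ha, hm₂⟩ := List.filter_eq_cons_iff.1 hl₂
  refine ⟨l₁ ++ m₁, m₂, by simp, ?_, hm₂, ha⟩
  rw [List.filter_append, hl₁, List.filter_eq_nil_iff.2 hm₁, List.append_nil]

open Classical in
theorem List.filter_mem_eq_of_filter_mem_compl_eq {α : Type*} {S T : Set α}
    (hST : _root_.Disjoint S T) {w w' : List α} (h : w'.filter (· ∈ Sᶜ) = w.filter (· ∈ Sᶜ)) :
    w'.filter (· ∈ T) = w.filter (· ∈ T) := by
  have hT : ∀ l : List α, (l.filter (· ∈ Sᶜ)).filter (· ∈ T) = l.filter (· ∈ T) := by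
    intro l
    rw [List.filter_filter]
    refine List.filter_congr fun x _ => ?_
    by_cases hx : x ∈ T <;> simp [hx, Set.disjoint_right.1 hST]
  rw [← hT w', h, hT]

namespace Shuffles

variable {α : Type} {u v w : List α}

theorem perm (h : Shuffles u v w) : w.Perm (u ++ v) := by
  induction h with
  | nil => exact .nil
  | left _ ih => exact ih.cons _
  | @right x _ _ _ _ ih => exact (ih.cons x).trans List.perm_middle.symm

theorem symm (h : Shuffles u v w) : Shuffles v u w := by
  induction h with
  | nil => exact .nil
  | left _ ih => exact ih.right
  | right _ ih => exact ih.left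

theorem filter (p : α → Bool) (h : Shuffles u v w) :
    Shuffles (u.filter p) (v.filter p) (w.filter p) := by
  induction h with
  | nil => exact .nil
  | @left x _ _ _ _ ih =>
    rw [List.filter_cons, List.filter_cons]
    split
    · exact ih.left
    · exact ih
  | @right x _ _ _ _ ih =>
    rw [List.filter_cons, List.filter_cons]
    split
    · exact ih.right
    · exact ih

theorem eq_of_right_nil (h : Shuffles u [] w) : w = u := by
  generalize hv : ([] : List α) = v at h
  induction h with
  | nil => rfl
  | left _ ih => rw [ih hv]
  | right => simp at hv

open Classical in
theorem filter_mem_eq_left {S : Set α} (h : Shuffles u v w) (hu : ∀ x ∈ u, x ∈ S)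
    (hv : ∀ x ∈ v, x ∉ S) : w.filter (· ∈ S) = u := by
  have hS := h.filter (· ∈ S)
  rw [List.filter_eq_self.2 (by simpa using hu), List.filter_eq_nil_iff.2 (by simpa using hv)]
    at hS
  exact hS.eq_of_right_nil

end Shuffles

open Classical in
theorem shuffles_filter_mem {α : Type} {S T : Set α} (hST : Disjoint S T) {w : List α}
    (hw : ∀ x ∈ w, x ∈ S ∨ x ∈ T) :
    Shuffles (w.filter (· ∈ S)) (w.filter (· ∈ T)) w := by
  induction w with
  | nil => exact .nil
  | cons x w ih =>
    have ih := ih fun y hy => hw y (List.mem_cons_of_mem _ hy)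
    rcases hw x List.mem_cons_self with hx | hx
    · simpa [List.filter_cons, hx, Set.disjoint_left.1 hST hx] using ih.left
    · simpa [List.filter_cons, hx, Set.disjoint_right.1 hST hx] using ih.right

namespace RNFAwtl

variable {α QA QB : Type}

/-- Instead of normalizing `A` to delete its whole input, the `B`-phase deletes every letter
outside `SB` without changing state. Letters outside `SA ∪ SB` cannot survive the `A`-phase:
the switch to `B` requires all remaining letters to be translucent. -/
def shuffle (A : RNFAwtl QA α) (B : RNFAwtl QB α) (SA SB : Set α) : RNFAwtl (QA ⊕ QB) α where
  τ
    | .inl q => A.τ q ∩ SA ∪ SB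
    | .inr p => B.τ p ∩ SB
  I := Sum.inl '' A.I
  δ
    | .inl q, a => {s | a ∈ SA ∧ a ∉ SB ∧ ∃ q' ∈ A.δ q a, s = .inl q'}
    | .inr p, a => {s | a ∉ SB ∧ s = .inr p ∨ a ∈ SB ∧ ∃ p' ∈ B.δ p a, s = .inr p'}
  δend
    | .inl q =>
      {s | (∃ q' ∈ A.δend q, s = .inl q') ∨ q ∈ A.Facc ∧ ∃ p ∈ B.I, s = .inr p}
    | .inr p => {s | ∃ p' ∈ B.δend p, s = .inr p'}
  Facc := Sum.inr '' B.Facc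
  tr := by
    rintro (q | p) a ha
    · refine Set.eq_empty_of_forall_notMem fun s ⟨haA, haB, q', hq', _⟩ => ?_
      rcases ha with ⟨haτ, -⟩ | haB'
      · simp [A.tr q a haτ] at hq'
      · exact haB haB'
    · refine Set.eq_empty_of_forall_notMem fun s hs => ?_
      rcases hs with ⟨haB, -⟩ | ⟨-, p', hp', -⟩
      · exact haB ha.2
      · simp [B.tr p a ha.1] at hp'
  accEnd := by
    rintro _ ⟨p, hp, rfl⟩
    simp [B.accEnd p hp]

theorem Deterministic.shuffle {A : RNFAwtl QA α} {B : RNFAwtl QB α} (hA : A.Deterministic)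
    (hB : B.Deterministic) (SA SB : Set α) : (A.shuffle B SA SB).Deterministic := by
  obtain ⟨⟨qa₀, hIA⟩, hδA, hδendA⟩ := hA
  obtain ⟨⟨p₀, hIB⟩, hδB, hδendB⟩ := hB
  refine ⟨⟨.inl qa₀, by simp [RNFAwtl.shuffle, hIA]⟩, ?_, ?_⟩
  · rintro (q | p) a s hs s' hs'
    · obtain ⟨-, -, q₁, hq₁, rfl⟩ := hs
      obtain ⟨-, -, q₂, hq₂, rfl⟩ := hs'
      rw [hδA q a hq₁ hq₂]
    · rcases hs with ⟨haB, rfl⟩ | ⟨haB, p₁, hp₁, rfl⟩ <;>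
        rcases hs' with ⟨haB', rfl⟩ | ⟨haB', p₂, hp₂, rfl⟩
      · rfl
      · exact absurd haB' haB
      · exact absurd haB haB'
      · rw [hδB p a hp₁ hp₂]
  · rintro (q | p) s hs s' hs'
    · rcases hs with ⟨q₁, hq₁, rfl⟩ | ⟨hq, p₁, hp₁, rfl⟩ <;>
        rcases hs' with ⟨q₂, hq₂, rfl⟩ | ⟨hq', p₂, hp₂, rfl⟩
      · rw [hδendA q hq₁ hq₂]
      · simp [A.accEnd q hq'] at hq₁
      · simp [A.accEnd q hq] at hq₂
      · rw [hIB] at hp₁ hp₂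
        rw [hp₁, hp₂]
    · obtain ⟨p₁, hp₁, rfl⟩ := hs
      obtain ⟨p₂, hp₂, rfl⟩ := hs'
      rw [hδendB p hp₁ hp₂]

open Classical

variable {A : RNFAwtl QA α} {B : RNFAwtl QB α} {SA SB : Set α}

theorem forall_mem_shuffle_τ_inl {q : QA} {w : List α}
    (hA : ∀ x ∈ w.filter (· ∈ SA), x ∈ A.τ q) (hB : ∀ x ∈ w.filter (· ∈ SAᶜ), x ∈ SB) :
    ∀ x ∈ w, x ∈ (A.shuffle B SA SB).τ (.inl q) := by
  intro x hx
  by_cases hxA : x ∈ SA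
  · exact Or.inl ⟨hA x (by simp [hx, hxA]), hxA⟩
  · exact Or.inr (hB x (by simp [hx, hxA]))

theorem forall_mem_τ_of_shuffle_τ_inl (hdisj : Disjoint SA SB) {q : QA} {w : List α}
    (h : ∀ x ∈ w, x ∈ (A.shuffle B SA SB).τ (.inl q)) :
    ∀ x ∈ w.filter (· ∈ SA), x ∈ A.τ q := by
  intro x hx
  simp only [List.mem_filter, decide_eq_true_eq] at hx
  rcases h x hx.1 with ⟨hxτ, -⟩ | hxB
  · exact hxτ
  · exact absurd hxB (Set.disjoint_left.1 hdisj hx.2)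

theorem exists_shuffle_step_inl (hdisj : Disjoint SA SB) {c c' : QA × List α}
    (hstep : A.Step c c') {w : List α} (hw : w.filter (· ∈ SA) = c.2)
    (hB : ∀ x ∈ w.filter (· ∈ SAᶜ), x ∈ SB) :
    ∃ w', (A.shuffle B SA SB).Step (.inl c.1, w) (.inl c'.1, w') ∧
      w'.filter (· ∈ SA) = c'.2 ∧ w'.filter (· ∈ SAᶜ) = w.filter (· ∈ SAᶜ) := by
  rcases hstep with ⟨s, a, t, hc, hs, ha, hδ, hc'⟩ | ⟨htr, hδ, hc'⟩
  · obtain ⟨x, y, rfl, rfl, rfl, haA⟩ := List.exists_eq_append_cons_of_filter_eq (hw.trans hc)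
    simp only [decide_eq_true_eq] at haA
    have haB : a ∉ SB := Set.disjoint_left.1 hdisj haA
    refine ⟨x ++ y, Or.inl ⟨x, a, y, rfl, ?_, ?_, ⟨haA, haB, c'.1, hδ, rfl⟩, rfl⟩, ?_, ?_⟩
    · exact forall_mem_shuffle_τ_inl hs fun e he => hB e (by simp_all)
    · rintro (⟨haτ, -⟩ | haB')
      · exact ha haτ
      · exact haB haB'
    · simp [hc', List.filter_append]
    · simp [List.filter_append, haA]
  · refine ⟨w, Or.inr ⟨?_, Or.inl ⟨c'.1, hδ, rfl⟩, rfl⟩, hw.trans hc'.symm, rfl⟩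
    exact forall_mem_shuffle_τ_inl (hw ▸ htr) hB

theorem exists_shuffle_reflTransGen_inl (hdisj : Disjoint SA SB) {c c' : QA × List α}
    (h : Relation.ReflTransGen A.Step c c') {w : List α} (hw : w.filter (· ∈ SA) = c.2)
    (hB : ∀ x ∈ w.filter (· ∈ SAᶜ), x ∈ SB) :
    ∃ w', Relation.ReflTransGen (A.shuffle B SA SB).Step (.inl c.1, w) (.inl c'.1, w') ∧
      w'.filter (· ∈ SA) = c'.2 ∧ w'.filter (· ∈ SAᶜ) = w.filter (· ∈ SAᶜ) := by
  induction h with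
  | refl => exact ⟨w, .refl, hw, rfl⟩
  | tail _ hstep ih =>
    obtain ⟨w₁, hrun, hw₁, hw₁c⟩ := ih
    obtain ⟨w₂, hstep', hw₂, hw₂c⟩ := exists_shuffle_step_inl hdisj hstep hw₁ (hw₁c ▸ hB)
    exact ⟨w₂, hrun.tail hstep', hw₂, hw₂c.trans hw₁c⟩

theorem shuffle_reflTransGen_filter_inr {p : QB} (pre x z : List α)
    (hpre : ∀ e ∈ pre, e ∈ (A.shuffle B SA SB).τ (.inr p))
    (hx : ∀ e ∈ x.filter (· ∈ SB), e ∈ B.τ p) :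
    Relation.ReflTransGen (A.shuffle B SA SB).Step
      (.inr p, pre ++ x ++ z) (.inr p, pre ++ x.filter (· ∈ SB) ++ z) := by
  induction x generalizing pre with
  | nil => exact .refl
  | cons e x ih =>
    by_cases he : e ∈ SB
    · have hpre' : ∀ e' ∈ pre ++ [e], e' ∈ (A.shuffle B SA SB).τ (.inr p) := by
        simp only [List.mem_append, List.mem_singleton]
        rintro e' (he' | rfl)
        · exact hpre e' he'
        · exact ⟨hx e' (by simp [he]), he⟩
      simpa [List.filter_cons, he] using
        ih (pre ++ [e]) hpre' fun e' he' => hx e' (by simp_all)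
    · have hstep : (A.shuffle B SA SB).Step
          (.inr p, pre ++ e :: x ++ z) (.inr p, pre ++ x ++ z) :=
        Or.inl ⟨pre, e, x ++ z, by simp, hpre, fun h => he h.2, Or.inl ⟨he, rfl⟩, by simp⟩
      simpa [List.filter_cons, he] using
        (ih pre hpre fun e' he' => hx e' (by simp_all)).head hstep

theorem exists_shuffle_reflTransGen_inr_of_step {c c' : QB × List α} (hstep : B.Step c c')
    {w : List α} (hw : w.filter (· ∈ SB) = c.2) :
    ∃ w', Relation.ReflTransGen (A.shuffle B SA SB).Step (.inr c.1, w) (.inr c'.1, w') ∧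
      w'.filter (· ∈ SB) = c'.2 := by
  rcases hstep with ⟨s, b, t, hc, hs, hb, hδ, hc'⟩ | ⟨htr, hδ, hc'⟩
  · obtain ⟨x, y, rfl, rfl, rfl, hbB⟩ := List.exists_eq_append_cons_of_filter_eq (hw.trans hc)
    simp only [decide_eq_true_eq] at hbB
    have hclean : Relation.ReflTransGen (A.shuffle B SA SB).Step
        (.inr c.1, x ++ b :: y) (.inr c.1, x.filter (· ∈ SB) ++ b :: y) := by
      simpa using shuffle_reflTransGen_filter_inr [] x (b :: y) (by simp) hs
    refine ⟨x.filter (· ∈ SB) ++ y, hclean.tail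
      (Or.inl ⟨_, b, y, rfl, ?_, fun h => hb h.1, Or.inr ⟨hbB, c'.1, hδ, rfl⟩, rfl⟩), ?_⟩
    · exact fun e he => ⟨hs e he, of_decide_eq_true (List.mem_filter.1 he).2⟩
    · simp [hc', List.filter_append, List.filter_filter]
  · rw [← hw] at htr hc'
    have hclean : Relation.ReflTransGen (A.shuffle B SA SB).Step
        (.inr c.1, w) (.inr c.1, w.filter (· ∈ SB)) := by
      simpa using shuffle_reflTransGen_filter_inr [] w [] (by simp) htr
    refine ⟨w.filter (· ∈ SB), hclean.tail (Or.inr ⟨?_, ⟨c'.1, hδ, rfl⟩, rfl⟩), ?_⟩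
    · exact fun e he => ⟨htr e he, of_decide_eq_true (List.mem_filter.1 he).2⟩
    · simp [hc', List.filter_filter]

theorem exists_shuffle_reflTransGen_inr {c c' : QB × List α}
    (h : Relation.ReflTransGen B.Step c c') {w : List α} (hw : w.filter (· ∈ SB) = c.2) :
    ∃ w', Relation.ReflTransGen (A.shuffle B SA SB).Step (.inr c.1, w) (.inr c'.1, w') ∧
      w'.filter (· ∈ SB) = c'.2 := by
  induction h with
  | refl => exact ⟨w, .refl, hw⟩
  | tail _ hstep ih =>
    obtain ⟨w₁, hrun, hw₁⟩ := ih
    obtain ⟨w₂, hrun', hw₂⟩ := exists_shuffle_reflTransGen_inr_of_step hstep hw₁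
    exact ⟨w₂, hrun.trans hrun', hw₂⟩

theorem step_of_shuffle_step_inl (hdisj : Disjoint SA SB) {q q' : QA} {w w' : List α}
    (h : (A.shuffle B SA SB).Step (.inl q, w) (.inl q', w')) :
    A.Step (q, w.filter (· ∈ SA)) (q', w'.filter (· ∈ SA)) ∧
      w'.filter (· ∈ SAᶜ) = w.filter (· ∈ SAᶜ) := by
  rcases h with ⟨u, a, v, rfl, hu, ha, ⟨haA, -, q'', hq'', hq'⟩, rfl⟩ | ⟨hw, hδ, rfl⟩
  · cases hq'
    refine ⟨Or.inl ⟨u.filter (· ∈ SA), a, v.filter (· ∈ SA), ?_,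
      forall_mem_τ_of_shuffle_τ_inl hdisj hu, fun haτ => ha (Or.inl ⟨haτ, haA⟩), hq'', ?_⟩, ?_⟩
    · simp [List.filter_append, haA]
    · simp [List.filter_append]
    · simp [List.filter_append, haA]
  · rcases hδ with ⟨q'', hq'', hq'⟩ | ⟨-, p, -, hp⟩
    · cases hq'
      exact ⟨Or.inr ⟨forall_mem_τ_of_shuffle_τ_inl hdisj hw, hq'', rfl⟩, rfl⟩
    · cases hp

theorem shuffle_step_inl_inr {q : QA} {p : QB} {w w' : List α}
    (h : (A.shuffle B SA SB).Step (.inl q, w) (.inr p, w')) :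
    w' = w ∧ q ∈ A.Facc ∧ p ∈ B.I ∧ ∀ x ∈ w, x ∈ (A.shuffle B SA SB).τ (.inl q) := by
  rcases h with ⟨-, -, -, -, -, -, ⟨-, -, q', -, hp⟩, -⟩ | ⟨hw, hδ, hw'⟩
  · cases hp
  · rcases hδ with ⟨q', -, hp⟩ | ⟨hq, p', hp', hp⟩
    · cases hp
    · cases hp
      exact ⟨hw', hq, hp', hw⟩

theorem reflGen_of_shuffle_step_inr {p : QB} {w w' : List α} {s : QA ⊕ QB}
    (h : (A.shuffle B SA SB).Step (.inr p, w) (s, w')) :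
    ∃ p', s = .inr p' ∧
      Relation.ReflGen B.Step (p, w.filter (· ∈ SB)) (p', w'.filter (· ∈ SB)) := by
  rcases h with ⟨u, a, v, rfl, hu, ha, hδ, rfl⟩ | ⟨hw, ⟨p', hp', rfl⟩, rfl⟩
  · have huB : u.filter (· ∈ SB) = u :=
      List.filter_eq_self.2 fun e he => by simpa using (hu e he).2
    rcases hδ with ⟨haB, rfl⟩ | ⟨haB, p', hp', rfl⟩
    · exact ⟨p, rfl, by simpa [List.filter_append, haB] using Relation.ReflGen.refl⟩
    · refine ⟨p', rfl, .single (Or.inl ⟨u, a, v.filter (· ∈ SB), ?_, fun e he => (hu e he).1,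
        fun haτ => ha ⟨haτ, haB⟩, hp', ?_⟩)⟩
      · simp [List.filter_append, huB, haB]
      · simp [List.filter_append, huB]
  · exact ⟨p', rfl, .single (Or.inr ⟨fun e he => (hw e (List.mem_of_mem_filter he)).1, hp', rfl⟩)⟩

theorem reflTransGen_of_shuffle_reflTransGen_inr {p : QB} {w : List α}
    {c : (QA ⊕ QB) × List α} (h : Relation.ReflTransGen (A.shuffle B SA SB).Step (.inr p, w) c) :
    ∃ p', c.1 = .inr p' ∧
      Relation.ReflTransGen B.Step (p, w.filter (· ∈ SB)) (p', c.2.filter (· ∈ SB)) := by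
  induction h with
  | refl => exact ⟨p, rfl, .refl⟩
  | @tail b c _ hstep ih =>
    obtain ⟨p₁, hb, hrun⟩ := ih
    obtain ⟨b₁, b₂⟩ := b
    obtain ⟨c₁, c₂⟩ := c
    cases hb
    obtain ⟨p₂, rfl, hstep'⟩ := reflGen_of_shuffle_step_inr hstep
    exact ⟨p₂, rfl, hrun.trans hstep'.to_reflTransGen⟩

theorem reflTransGen_of_shuffle_reflTransGen_inl (hdisj : Disjoint SA SB) {q₀ q : QA}
    {w : List α} {c : (QA ⊕ QB) × List α}
    (h : Relation.ReflTransGen (A.shuffle B SA SB).Step (.inl q₀, w) c) (hc : c.1 = .inl q) :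
    Relation.ReflTransGen A.Step (q₀, w.filter (· ∈ SA)) (q, c.2.filter (· ∈ SA)) ∧
      c.2.filter (· ∈ SAᶜ) = w.filter (· ∈ SAᶜ) := by
  induction h generalizing q with
  | refl => cases hc; exact ⟨.refl, rfl⟩
  | @tail b c _ hstep ih =>
    obtain ⟨b₁ | p, b₂⟩ := b
    · obtain ⟨c₁, c₂⟩ := c
      cases hc
      obtain ⟨hrun, hb⟩ := ih rfl
      obtain ⟨hstep', hbc⟩ := step_of_shuffle_step_inl hdisj hstep
      exact ⟨hrun.tail hstep', hbc.trans hb⟩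
    · obtain ⟨p', hp', -⟩ := reflGen_of_shuffle_step_inr hstep
      rw [hc] at hp'
      cases hp'

theorem accepts_of_shuffle_accepts (hdisj : Disjoint SA SB) {w : List α}
    (h : (A.shuffle B SA SB).Accepts w) :
    A.Accepts (w.filter (· ∈ SA)) ∧ B.Accepts (w.filter (· ∈ SB)) ∧
      ∀ x ∈ w, x ∈ SA ∨ x ∈ SB := by
  obtain ⟨_, ⟨q₀, hq₀, rfl⟩, _, wf, hrun, hwf, ⟨pf, hpf, rfl⟩⟩ := h
  obtain ⟨⟨_, w₁⟩, ⟨_ | p, w₂⟩, hrun₁, ⟨qf, rfl⟩, hswitch, hs₂, hrun₂⟩ :=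
    hrun.exists_step_of_not (P := fun c => ∃ q, c.1 = .inl q) ⟨q₀, rfl⟩ (by simp)
  · exact absurd ⟨_, rfl⟩ hs₂
  obtain ⟨hw₂, hqf, hp, hw₁⟩ := shuffle_step_inl_inr hswitch
  rw [hw₂] at hrun₂
  obtain ⟨hrunA, hw₁A⟩ := reflTransGen_of_shuffle_reflTransGen_inl hdisj hrun₁ rfl
  obtain ⟨_, ⟨⟩, hrunB⟩ := reflTransGen_of_shuffle_reflTransGen_inr hrun₂
  have hwfB : wf.filter (· ∈ SB) = wf :=
    List.filter_eq_self.2 fun x hx => by simpa using (hwf x hx).2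
  refine ⟨⟨q₀, hq₀, qf, _, hrunA, forall_mem_τ_of_shuffle_τ_inl hdisj hw₁, hqf⟩,
    ⟨p, hp, pf, wf, ?_, fun x hx => (hwf x hx).1, hpf⟩, fun x hx => ?_⟩
  · rwa [hwfB, List.filter_mem_eq_of_filter_mem_compl_eq hdisj hw₁A] at hrunB
  · by_cases hxA : x ∈ SA
    · exact Or.inl hxA
    · have hx₁ : x ∈ w₁.filter (· ∈ SAᶜ) := hw₁A ▸ by simp [hx, hxA]
      rcases hw₁ x (List.mem_of_mem_filter hx₁) with ⟨-, hxA'⟩ | hxB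
      · exact absurd hxA' hxA
      · exact Or.inr hxB

theorem shuffle_accepts (hdisj : Disjoint SA SB) {w : List α}
    (hA : A.Accepts (w.filter (· ∈ SA))) (hB : B.Accepts (w.filter (· ∈ SB)))
    (hw : ∀ x ∈ w, x ∈ SA ∨ x ∈ SB) : (A.shuffle B SA SB).Accepts w := by
  obtain ⟨q₀, hq₀, qf, u, hrunA, hu, hqf⟩ := hA
  obtain ⟨p₀, hp₀, pf, v, hrunB, hv, hpf⟩ := hB
  have hwB : ∀ x ∈ w.filter (· ∈ SAᶜ), x ∈ SB := fun x hx => by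
    simp only [List.mem_filter, Set.mem_compl_iff, decide_eq_true_eq] at hx
    exact (hw x hx.1).resolve_left hx.2
  obtain ⟨w₁, hrun₁, hw₁A, hw₁⟩ :=
    exists_shuffle_reflTransGen_inl (B := B) hdisj hrunA (c := (q₀, _)) rfl hwB
  dsimp only at hrun₁ hw₁A
  have hswitch : (A.shuffle B SA SB).Step (.inl qf, w₁) (.inr p₀, w₁) :=
    Or.inr ⟨forall_mem_shuffle_τ_inl (hw₁A ▸ hu) (hw₁ ▸ hwB), Or.inr ⟨hqf, p₀, hp₀, rfl⟩, rfl⟩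
  obtain ⟨w₂, hrun₂, hw₂⟩ := exists_shuffle_reflTransGen_inr (A := A) (SA := SA) hrunB
    (c := (p₀, _)) (List.filter_mem_eq_of_filter_mem_compl_eq hdisj hw₁)
  dsimp only at hrun₂ hw₂
  have hclean : Relation.ReflTransGen (A.shuffle B SA SB).Step
      (.inr pf, w₂) (.inr pf, w₂.filter (· ∈ SB)) := by
    simpa using shuffle_reflTransGen_filter_inr [] w₂ [] (by simp) (hw₂ ▸ hv)
  rw [hw₂] at hclean
  refine ⟨.inl q₀, ⟨q₀, hq₀, rfl⟩, .inr pf, v, ((hrun₁.tail hswitch).trans hrun₂).trans hclean,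
    fun x hx => ⟨hv x hx, ?_⟩, ⟨pf, hpf, rfl⟩⟩
  rw [← hw₂] at hx
  exact of_decide_eq_true (List.mem_filter.1 hx).2

theorem shuffle_lang (hdisj : Disjoint SA SB) (hA : ∀ w ∈ A.lang, ∀ x ∈ w, x ∈ SA)
    (hB : ∀ w ∈ B.lang, ∀ x ∈ w, x ∈ SB) :
    (A.shuffle B SA SB).lang = shuffleLang A.lang B.lang := by
  ext w
  constructor
  · intro h
    obtain ⟨hwA, hwB, hw⟩ := accepts_of_shuffle_accepts hdisj h
    exact ⟨_, hwA, _, hwB, shuffles_filter_mem hdisj hw⟩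
  · rintro ⟨u, hu, v, hv, hs⟩
    have huA := hA u hu
    have hvB := hB v hv
    have hvA : ∀ x ∈ v, x ∉ SA := fun x hx => Set.disjoint_right.1 hdisj (hvB x hx)
    have huB : ∀ x ∈ u, x ∉ SB := fun x hx => Set.disjoint_left.1 hdisj (huA x hx)
    refine shuffle_accepts hdisj (hs.filter_mem_eq_left huA hvA ▸ hu)
      (hs.symm.filter_mem_eq_left hvB huB ▸ hv) fun x hx => ?_
    rcases List.mem_append.1 (hs.perm.mem_iff.1 hx) with hxu | hxv
    · exact Or.inl (huA x hxu)
    · exact Or.inr (hvB x hxv)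

end RNFAwtl

/-- ℒ(RDFAwtl) is closed under disjoint shuffle. -/
theorem RDFAwtl_closed_disjoint_shuffle (α : Type) [Fintype α]
    (SA SB : Set α) (hdisj : Disjoint SA SB)
    (LA LB : Set (List α))
    (hLA : LA ∈ RDFAwtlLangs α) (hLB : LB ∈ RDFAwtlLangs α)
    (hA : ∀ w ∈ LA, ∀ x ∈ w, x ∈ SA) (hB : ∀ w ∈ LB, ∀ x ∈ w, x ∈ SB) :
    shuffleLang LA LB ∈ RDFAwtlLangs α := by
  obtain ⟨QA, _, A, hdetA, rfl⟩ := hLA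
  obtain ⟨QB, _, B, hdetB, rfl⟩ := hLB
  exact ⟨QA ⊕ QB, inferInstance, A.shuffle B SA SB, hdetA.shuffle hdetB SA SB,
    RNFAwtl.shuffle_lang hdisj hA hB⟩
end
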